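/- arXiv:1204.0750 — 7 statements merged into one kernel-verified Lean document; each statement's English description precedes it below -/
import Mathlib

section
/- For any measurable sets A, B, E, F ⊆ ℝⁿ and any s ∈ (0,1), the interaction L(A,B) := ∫_A ∫_B |x-y|^{-(n+s)} dx dy satisfies L((E∪F)∩A, (ℝⁿ\(E∪F))∩B) ≤ L(E∩A, (ℝⁿ\E)∩B) + L(F∩A, (ℝⁿ\F)∩B). -/
open MeasureTheory Filter Metric Set

noncomputable def interL (n : ℕ) (s : ℝ) (A B : Set (EuclideanSpace ℝ (Fin n))) : ENNReal :=
  ∫⁻ x in A, ∫⁻ y in B, ENNReal.ofReal (‖x - y‖ ^ (-((n : ℝ) + s)))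

noncomputable def fracPer (n : ℕ) (s : ℝ) (E Ω : Set (EuclideanSpace ℝ (Fin n))) : ENNReal :=
  interL n s (E ∩ Ω) (Eᶜ ∩ Ω) + interL n s (E ∩ Ω) (Eᶜ ∩ Ωᶜ) + interL n s (E ∩ Ωᶜ) (Eᶜ ∩ Ω)

/-- The (n-1)-dimensional measure of the unit sphere `S^{n-1}`, i.e. `n·ω_n`. -/
noncomputable def sphereArea (n : ℕ) : ℝ :=
  (n : ℝ) * (volume (ball (0 : EuclideanSpace ℝ (Fin n)) 1)).toReal

theorem stmt_0 {n : ℕ} {s : ℝ} (hs : s ∈ Set.Ioo (0 : ℝ) 1)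
    (A B E F : Set (EuclideanSpace ℝ (Fin n)))
    (hA : MeasurableSet A) (hB : MeasurableSet B)
    (hE : MeasurableSet E) (hF : MeasurableSet F) :
    interL n s ((E ∪ F) ∩ A) ((E ∪ F)ᶜ ∩ B) ≤
      interL n s (E ∩ A) (Eᶜ ∩ B) + interL n s (F ∩ A) (Fᶜ ∩ B) := by

  have hmono : ∀ (A1 A2 B1 B2 : Set (EuclideanSpace ℝ (Fin n))), A1 ⊆ A2 → B1 ⊆ B2 →
      interL n s A1 B1 ≤ interL n s A2 B2 := by
    intro A1 A2 B1 B2 hA12 hB12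
    unfold interL
    refine le_trans (lintegral_mono fun x => ?_) (lintegral_mono_set hA12)
    exact lintegral_mono_set hB12
  have hset : (E ∪ F) ∩ A = (E ∩ A) ∪ ((F \ E) ∩ A) := by
    rw [← union_diff_self, union_inter_distrib_right]
  calc interL n s ((E ∪ F) ∩ A) ((E ∪ F)ᶜ ∩ B)
      ≤ interL n s (E ∩ A) ((E ∪ F)ᶜ ∩ B) + interL n s ((F \ E) ∩ A) ((E ∪ F)ᶜ ∩ B) := by
        unfold interL; rw [hset]; exact lintegral_union_le _ _ _
    _ ≤ interL n s (E ∩ A) (Eᶜ ∩ B) + interL n s (F ∩ A) (Fᶜ ∩ B) := by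
        gcongr
        · exact hmono _ _ _ _ subset_rfl
            (inter_subset_inter (compl_subset_compl.2 subset_union_left) subset_rfl)
        · exact hmono _ _ _ _ (inter_subset_inter diff_subset subset_rfl)
            (inter_subset_inter (compl_subset_compl.2 subset_union_right) subset_rfl)
end

section
/- If E and F are disjoint measurable subsets of ℝⁿ and Ω is open, then for every s ∈ (0,1): Per_s(E∪F;Ω) = Per_s(E;Ω) + Per_s(F;Ω) − L(E∩Ω, Eᶜ∩F) − L(F∩Ω, E∩Fᶜ) − L(E∩Ωᶜ, Eᶜ∩F∩Ω) − L(F∩Ωᶜ, E∩Fᶜ∩Ω), whenever all terms are finite. -/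
open MeasureTheory Filter Metric Set

lemma interL_union_left {n : ℕ} {s : ℝ} (A B C : Set (EuclideanSpace ℝ (Fin n)))
    (hB : MeasurableSet B) (h : Disjoint A B) :
    interL n s (A ∪ B) C = interL n s A C + interL n s B C :=
  lintegral_union hB h

lemma interL_union_right {n : ℕ} {s : ℝ} (A B C : Set (EuclideanSpace ℝ (Fin n)))
    (hC : MeasurableSet C) (h : Disjoint B C) :
    interL n s A (B ∪ C) = interL n s A B + interL n s A C := by
  have hm : Measurable (fun p : EuclideanSpace ℝ (Fin n) × EuclideanSpace ℝ (Fin n) =>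
      ENNReal.ofReal (‖p.1 - p.2‖ ^ (-((n : ℝ) + s)))) := by fun_prop
  have hg : Measurable (fun x : EuclideanSpace ℝ (Fin n) =>
      ∫⁻ y in B, ENNReal.ofReal (‖x - y‖ ^ (-((n : ℝ) + s)))) :=
    hm.lintegral_prod_right'
  unfold interL
  rw [← lintegral_add_left hg]
  exact lintegral_congr fun x => lintegral_union hC h

set_option maxHeartbeats 1000000 in
theorem stmt_2 {n : ℕ} {s : ℝ} (hs : s ∈ Set.Ioo (0 : ℝ) 1)
    (E F Ω : Set (EuclideanSpace ℝ (Fin n)))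
    (hE : MeasurableSet E) (hF : MeasurableSet F) (hΩ : IsOpen Ω)
    (hdisj : Disjoint E F)
    (h1 : fracPer n s E Ω ≠ ⊤) (h2 : fracPer n s F Ω ≠ ⊤)
    (h3 : interL n s (E ∩ Ω) (Eᶜ ∩ F) ≠ ⊤)
    (h4 : interL n s (F ∩ Ω) (E ∩ Fᶜ) ≠ ⊤)
    (h5 : interL n s (E ∩ Ωᶜ) (Eᶜ ∩ F ∩ Ω) ≠ ⊤)
    (h6 : interL n s (F ∩ Ωᶜ) (E ∩ Fᶜ ∩ Ω) ≠ ⊤) :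
    (fracPer n s (E ∪ F) Ω).toReal =
      (fracPer n s E Ω).toReal + (fracPer n s F Ω).toReal
      - (interL n s (E ∩ Ω) (Eᶜ ∩ F)).toReal
      - (interL n s (F ∩ Ω) (E ∩ Fᶜ)).toReal
      - (interL n s (E ∩ Ωᶜ) (Eᶜ ∩ F ∩ Ω)).toReal
      - (interL n s (F ∩ Ωᶜ) (E ∩ Fᶜ ∩ Ω)).toReal := by
  have hΩm := hΩ.measurableSet
  -- disjointness facts
  have dΩ : ∀ (A B C D : Set (EuclideanSpace ℝ (Fin n))),
      Disjoint (A ∩ B ∩ Ω) (C ∩ D ∩ Ωᶜ) := fun A B C D =>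
    Set.disjoint_left.2 fun x hx hx' => hx'.2 hx.2
  have dEFΩ : Disjoint (E ∩ Ω) (F ∩ Ω) :=
    hdisj.mono inter_subset_left inter_subset_left
  have dEFΩc : Disjoint (E ∩ Ωᶜ) (F ∩ Ωᶜ) :=
    hdisj.mono inter_subset_left inter_subset_left
  have dFc : ∀ (A C : Set (EuclideanSpace ℝ (Fin n))),
      Disjoint (A ∩ Fᶜ ∩ C) (Eᶜ ∩ F ∩ C) :=
    fun A C => Set.disjoint_left.2 fun x hx hx' => hx.1.2 hx'.1.2
  have dEc : ∀ (A C : Set (EuclideanSpace ℝ (Fin n))),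
      Disjoint (Eᶜ ∩ A ∩ C) (E ∩ Fᶜ ∩ C) :=
    fun A C => Set.disjoint_left.2 fun x hx hx' => hx.1.1 hx'.1.1
  -- set decompositions
  have s1 : (E ∪ F) ∩ Ω = (E ∩ Ω) ∪ (F ∩ Ω) := by
    ext x; simp only [mem_inter_iff, mem_union, mem_compl_iff]; tauto
  have s2 : (E ∪ F) ∩ Ωᶜ = (E ∩ Ωᶜ) ∪ (F ∩ Ωᶜ) := by
    ext x; simp only [mem_inter_iff, mem_union, mem_compl_iff]; tauto
  have s3 : (E ∪ F)ᶜ ∩ Ω = Eᶜ ∩ Fᶜ ∩ Ω := by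
    ext x; simp only [mem_inter_iff, mem_union, mem_compl_iff]; tauto
  have s4 : (E ∪ F)ᶜ ∩ Ωᶜ = Eᶜ ∩ Fᶜ ∩ Ωᶜ := by
    ext x; simp only [mem_inter_iff, mem_union, mem_compl_iff]; tauto
  have s5 : Eᶜ ∩ Ω = (Eᶜ ∩ Fᶜ ∩ Ω) ∪ (Eᶜ ∩ F ∩ Ω) := by
    ext x; simp only [mem_inter_iff, mem_union, mem_compl_iff]; tauto
  have s6 : Eᶜ ∩ Ωᶜ = (Eᶜ ∩ Fᶜ ∩ Ωᶜ) ∪ (Eᶜ ∩ F ∩ Ωᶜ) := by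
    ext x; simp only [mem_inter_iff, mem_union, mem_compl_iff]; tauto
  have s7 : Eᶜ ∩ F = (Eᶜ ∩ F ∩ Ω) ∪ (Eᶜ ∩ F ∩ Ωᶜ) := by
    ext x; simp only [mem_inter_iff, mem_union, mem_compl_iff]; tauto
  have s8 : Fᶜ ∩ Ω = (Eᶜ ∩ Fᶜ ∩ Ω) ∪ (E ∩ Fᶜ ∩ Ω) := by
    ext x; simp only [mem_inter_iff, mem_union, mem_compl_iff]; tauto
  have s9 : Fᶜ ∩ Ωᶜ = (Eᶜ ∩ Fᶜ ∩ Ωᶜ) ∪ (E ∩ Fᶜ ∩ Ωᶜ) := by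
    ext x; simp only [mem_inter_iff, mem_union, mem_compl_iff]; tauto
  have s10 : E ∩ Fᶜ = (E ∩ Fᶜ ∩ Ω) ∪ (E ∩ Fᶜ ∩ Ωᶜ) := by
    ext x; simp only [mem_inter_iff, mem_union, mem_compl_iff]; tauto
  -- split each piece into atoms
  have eU : fracPer n s (E ∪ F) Ω
      = (interL n s (E ∩ Ω) (Eᶜ ∩ Fᶜ ∩ Ω) + interL n s (F ∩ Ω) (Eᶜ ∩ Fᶜ ∩ Ω))
      + (interL n s (E ∩ Ω) (Eᶜ ∩ Fᶜ ∩ Ωᶜ) + interL n s (F ∩ Ω) (Eᶜ ∩ Fᶜ ∩ Ωᶜ))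
      + (interL n s (E ∩ Ωᶜ) (Eᶜ ∩ Fᶜ ∩ Ω) + interL n s (F ∩ Ωᶜ) (Eᶜ ∩ Fᶜ ∩ Ω)) := by
    unfold fracPer
    rw [s1, s2, s3, s4,
      interL_union_left _ _ _ (hF.inter hΩm) dEFΩ,
      interL_union_left _ _ _ (hF.inter hΩm) dEFΩ,
      interL_union_left _ _ _ (hF.inter hΩm.compl) dEFΩc]
  have eE : fracPer n s E Ω
      = (interL n s (E ∩ Ω) (Eᶜ ∩ Fᶜ ∩ Ω) + interL n s (E ∩ Ω) (Eᶜ ∩ F ∩ Ω))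
      + (interL n s (E ∩ Ω) (Eᶜ ∩ Fᶜ ∩ Ωᶜ) + interL n s (E ∩ Ω) (Eᶜ ∩ F ∩ Ωᶜ))
      + (interL n s (E ∩ Ωᶜ) (Eᶜ ∩ Fᶜ ∩ Ω) + interL n s (E ∩ Ωᶜ) (Eᶜ ∩ F ∩ Ω)) := by
    unfold fracPer
    rw [s5, s6,
      interL_union_right _ _ _ ((hE.compl.inter hF).inter hΩm) (dFc _ _),
      interL_union_right _ _ _ ((hE.compl.inter hF).inter hΩm.compl) (dFc _ _),
      interL_union_right _ _ _ ((hE.compl.inter hF).inter hΩm) (dFc _ _)]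
  have eF : fracPer n s F Ω
      = (interL n s (F ∩ Ω) (Eᶜ ∩ Fᶜ ∩ Ω) + interL n s (F ∩ Ω) (E ∩ Fᶜ ∩ Ω))
      + (interL n s (F ∩ Ω) (Eᶜ ∩ Fᶜ ∩ Ωᶜ) + interL n s (F ∩ Ω) (E ∩ Fᶜ ∩ Ωᶜ))
      + (interL n s (F ∩ Ωᶜ) (Eᶜ ∩ Fᶜ ∩ Ω) + interL n s (F ∩ Ωᶜ) (E ∩ Fᶜ ∩ Ω)) := by
    unfold fracPer
    rw [s8, s9,
      interL_union_right _ _ _ ((hE.inter hF.compl).inter hΩm) (dEc _ _),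
      interL_union_right _ _ _ ((hE.inter hF.compl).inter hΩm.compl) (dEc _ _),
      interL_union_right _ _ _ ((hE.inter hF.compl).inter hΩm) (dEc _ _)]
  have e3 : interL n s (E ∩ Ω) (Eᶜ ∩ F)
      = interL n s (E ∩ Ω) (Eᶜ ∩ F ∩ Ω) + interL n s (E ∩ Ω) (Eᶜ ∩ F ∩ Ωᶜ) := by
    conv_lhs => rw [s7]
    exact interL_union_right _ _ _ ((hE.compl.inter hF).inter hΩm.compl) (dΩ _ _ _ _)
  have e4 : interL n s (F ∩ Ω) (E ∩ Fᶜ)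
      = interL n s (F ∩ Ω) (E ∩ Fᶜ ∩ Ω) + interL n s (F ∩ Ω) (E ∩ Fᶜ ∩ Ωᶜ) := by
    conv_lhs => rw [s10]
    exact interL_union_right _ _ _ ((hE.inter hF.compl).inter hΩm.compl) (dΩ _ _ _ _)
  -- the key ENNReal identity
  have key : fracPer n s (E ∪ F) Ω
      + interL n s (E ∩ Ω) (Eᶜ ∩ F) + interL n s (F ∩ Ω) (E ∩ Fᶜ)
      + interL n s (E ∩ Ωᶜ) (Eᶜ ∩ F ∩ Ω) + interL n s (F ∩ Ωᶜ) (E ∩ Fᶜ ∩ Ω)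
      = fracPer n s E Ω + fracPer n s F Ω := by
    rw [eU, eE, eF, e3, e4]; ring
  -- finiteness
  have hRfin : fracPer n s E Ω + fracPer n s F Ω ≠ ⊤ := ENNReal.add_ne_top.2 ⟨h1, h2⟩
  have hLfin : fracPer n s (E ∪ F) Ω
      + interL n s (E ∩ Ω) (Eᶜ ∩ F) + interL n s (F ∩ Ω) (E ∩ Fᶜ)
      + interL n s (E ∩ Ωᶜ) (Eᶜ ∩ F ∩ Ω) + interL n s (F ∩ Ωᶜ) (E ∩ Fᶜ ∩ Ω) ≠ ⊤ :=
    key ▸ hRfin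
  have hP : fracPer n s (E ∪ F) Ω ≠ ⊤ :=
    ne_top_of_le_ne_top hLfin
      (le_add_right (le_add_right (le_add_right (le_add_right le_rfl))))
  have f1 : fracPer n s (E ∪ F) Ω + interL n s (E ∩ Ω) (Eᶜ ∩ F) ≠ ⊤ :=
    ENNReal.add_ne_top.2 ⟨hP, h3⟩
  have f2 : fracPer n s (E ∪ F) Ω + interL n s (E ∩ Ω) (Eᶜ ∩ F)
      + interL n s (F ∩ Ω) (E ∩ Fᶜ) ≠ ⊤ := ENNReal.add_ne_top.2 ⟨f1, h4⟩
  have f3 : fracPer n s (E ∪ F) Ω + interL n s (E ∩ Ω) (Eᶜ ∩ F)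
      + interL n s (F ∩ Ω) (E ∩ Fᶜ) + interL n s (E ∩ Ωᶜ) (Eᶜ ∩ F ∩ Ω) ≠ ⊤ :=
    ENNReal.add_ne_top.2 ⟨f2, h5⟩
  have h' := congrArg ENNReal.toReal key
  rw [ENNReal.toReal_add f3 h6, ENNReal.toReal_add f2 h5, ENNReal.toReal_add f1 h4,
    ENNReal.toReal_add hP h3, ENNReal.toReal_add h1 h2] at h'
  linarith
end

section
/- Let F ⊂ ℝⁿ be a bounded measurable set, E ⊆ ℝⁿ measurable, and for s ∈ (0,1) set α_s(E) = s·∫_{E∖B_1} |y|^{-(n+s)} dy. Then lim_{R→∞} limsup_{s→0⁺} | α_s(E)·|F| − s·∫_F ∫_{E∖B_R} |x−y|^{-(n+s)} dx dy | = 0. -/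
/-!
Polar coordinates give `s ∫_{|y| ≥ 1} |y|^{-(n+s)} dy = n ω_n`, so `α_s(E)` stays bounded as
`s → 0⁺`. If `F ⊆ B̄_M` and `|y| ≥ R > M`, then `(1 - M/R)|y| ≤ |x - y| ≤ (1 + M/R)|y|` for
`x ∈ F`; hence `s ∫_F ∫_{E∖B_R} |x-y|^{-(n+s)}` equals `s |F| ∫_{E∖B_R} |y|^{-(n+s)}` up to factors
`(1 ± M/R)^{-(n+s)}`, which tend to `1` as `R → ∞` uniformly in `s ∈ (0,1]`. Replacing `E ∖ B_1`
by `E ∖ B_R` in `α_s(E)` removes a part of `B_R` on which the kernel is at most `1`, so it costs at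
most `s |B_R|`, which vanishes as `s → 0⁺`.
-/

open MeasureTheory Filter Metric Set

open scoped ENNReal Topology
open Module (finrank)

section Tail
variable {V : Type*} [NormedAddCommGroup V] [NormedSpace ℝ V] [FiniteDimensional ℝ V]
  [MeasurableSpace V] [BorelSpace V]

lemma pow_mul_indicator_rpow_eqOn (d : ℕ) (hd : d ≠ 0) (s : ℝ) :
    EqOn (fun r : ℝ ↦ r ^ (d - 1) • (Ici 1).indicator (fun r : ℝ ↦ r ^ (-((d : ℝ) + s))) r)
      ((Ici 1).indicator fun r ↦ r ^ (-1 - s)) (Ioi 0) := by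
  intro r (hr : 0 < r)
  by_cases h : 1 ≤ r
  · simp only [smul_eq_mul, indicator_of_mem (mem_Ici.2 h)]
    rw [← Real.rpow_natCast, ← Real.rpow_add hr]
    congr 1
    rw [Nat.cast_sub (Nat.one_le_iff_ne_zero.2 hd)]
    ring
  · simp [indicator_of_notMem (show r ∉ Ici 1 from h)]

theorem lintegral_compl_ball_rpow_neg_norm (μ : Measure V) [μ.IsAddHaarMeasure] {s : ℝ}
    (hs : 0 < s) :
    ∫⁻ y in (ball 0 1)ᶜ, ENNReal.ofReal (‖y‖ ^ (-((finrank ℝ V : ℝ) + s))) ∂μ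
      = ENNReal.ofReal (finrank ℝ V * μ.real (ball 0 1) / s) := by
  rcases subsingleton_or_nontrivial V with hV | hV
  · have : ball (0 : V) 1 = univ := eq_univ_of_forall fun y ↦ by simp [Subsingleton.elim y 0]
    simp [this, Module.finrank_zero_of_subsingleton]
  set d := finrank ℝ V
  have hd : d ≠ 0 := Module.finrank_pos.ne'
  set f : ℝ → ℝ := (Ici 1).indicator fun r ↦ r ^ (-((d : ℝ) + s))
  have hradial := pow_mul_indicator_rpow_eqOn d hd s
  have hIci : Integrable ((Ici 1).indicator fun r : ℝ ↦ r ^ (-1 - s)) := by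
    rw [integrable_indicator_iff measurableSet_Ici, integrableOn_Ici_iff_integrableOn_Ioi]
    exact integrableOn_Ioi_rpow_of_lt (by linarith) one_pos
  calc ∫⁻ y in (ball 0 1)ᶜ, ENNReal.ofReal (‖y‖ ^ (-((d : ℝ) + s))) ∂μ
      = ∫⁻ y, ENNReal.ofReal (f ‖y‖) ∂μ := by
        rw [← lintegral_indicator measurableSet_ball.compl]
        refine lintegral_congr fun y ↦ ?_
        by_cases hy : 1 ≤ ‖y‖ <;> simp [f, hy]
    _ = ENNReal.ofReal (∫ y, f ‖y‖ ∂μ) := by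
        refine (ofReal_integral_eq_lintegral_ofReal ?_ ?_).symm
        · rw [integrable_fun_norm_addHaar μ]
          exact (integrableOn_congr_fun hradial measurableSet_Ioi).2 hIci.integrableOn
        · exact Eventually.of_forall fun y ↦
            indicator_nonneg (fun r hr ↦ Real.rpow_nonneg (zero_le_one.trans hr) _) _
    _ = ENNReal.ofReal (d * μ.real (ball 0 1) / s) := by
        rw [integral_fun_norm_addHaar μ f, setIntegral_congr_fun measurableSet_Ioi hradial,
          setIntegral_indicator measurableSet_Ici, inter_eq_right.2 (Ici_subset_Ioi.2 one_pos),
          integral_Ici_eq_integral_Ioi, integral_Ioi_rpow_of_lt (by linarith) one_pos]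
        simp only [Real.one_rpow, nsmul_eq_mul, smul_eq_mul]
        rw [show -1 - s + 1 = -s by ring]
        congr 1
        field_simp
        exact mul_comm _ _

theorem lintegral_compl_ball_rpow_neg_norm_euclidean {n : ℕ} {s : ℝ} (hs : 0 < s) :
    ∫⁻ y in (ball (0 : EuclideanSpace ℝ (Fin n)) 1)ᶜ, ENNReal.ofReal (‖y‖ ^ (-((n : ℝ) + s)))
      = ENNReal.ofReal (sphereArea n / s) := by
  simpa [finrank_euclideanSpace_fin, sphereArea, measureReal_def] using
    lintegral_compl_ball_rpow_neg_norm (volume : Measure (EuclideanSpace ℝ (Fin n))) hs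

end Tail

section KernelComparison
variable {G : Type*} [SeminormedAddCommGroup G] {x y : G} {M R p : ℝ}

lemma one_sub_div_mul_norm_le_norm_sub (hx : ‖x‖ ≤ M) (hy : R ≤ ‖y‖) (hR : 0 < R) :
    (1 - M / R) * ‖y‖ ≤ ‖x - y‖ := by
  have hM : M ≤ M / R * ‖y‖ := by
    rw [div_mul_eq_mul_div, le_div_iff₀ hR]
    exact mul_le_mul_of_nonneg_left hy ((norm_nonneg x).trans hx)
  have := norm_sub_norm_le y x
  rw [norm_sub_rev] at this
  linarith

lemma norm_sub_le_one_add_div_mul_norm (hx : ‖x‖ ≤ M) (hy : R ≤ ‖y‖) (hR : 0 < R) :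
    ‖x - y‖ ≤ (1 + M / R) * ‖y‖ := by
  have hM : M ≤ M / R * ‖y‖ := by
    rw [div_mul_eq_mul_div, le_div_iff₀ hR]
    exact mul_le_mul_of_nonneg_left hy ((norm_nonneg x).trans hx)
  linarith [norm_sub_le x y]

lemma rpow_neg_norm_sub_le (hx : ‖x‖ ≤ M) (hy : R ≤ ‖y‖) (hMR : M < R) (hp : 0 ≤ p) :
    ‖x - y‖ ^ (-p) ≤ (1 - M / R) ^ (-p) * ‖y‖ ^ (-p) := by
  have hR : 0 < R := ((norm_nonneg x).trans hx).trans_lt hMR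
  have hl : 0 < 1 - M / R := by rw [sub_pos, div_lt_one hR]; exact hMR
  rw [← Real.mul_rpow hl.le (norm_nonneg y)]
  exact Real.rpow_le_rpow_of_nonpos (mul_pos hl (hR.trans_le hy))
    (one_sub_div_mul_norm_le_norm_sub hx hy hR) (neg_nonpos.2 hp)

lemma rpow_neg_le_rpow_neg_norm_sub (hx : ‖x‖ ≤ M) (hy : R ≤ ‖y‖) (hMR : M < R) (hp : 0 ≤ p) :
    (1 + M / R) ^ (-p) * ‖y‖ ^ (-p) ≤ ‖x - y‖ ^ (-p) := by
  have hR : 0 < R := ((norm_nonneg x).trans hx).trans_lt hMR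
  have hl : 0 < 1 - M / R := by rw [sub_pos, div_lt_one hR]; exact hMR
  have hxy : 0 < ‖x - y‖ :=
    (mul_pos hl (hR.trans_le hy)).trans_le (one_sub_div_mul_norm_le_norm_sub hx hy hR)
  have hM : 0 ≤ M := (norm_nonneg x).trans hx
  rw [← Real.mul_rpow (by positivity) (norm_nonneg y)]
  exact Real.rpow_le_rpow_of_nonpos hxy (norm_sub_le_one_add_div_mul_norm hx hy hR)
    (neg_nonpos.2 hp)

variable [MeasurableSpace G] (μ : Measure G)

lemma setLIntegral_diff_ball_one_le (S : Set G) (R : ℝ) (hp : 0 ≤ p) :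
    ∫⁻ y in S \ ball 0 1, ENNReal.ofReal (‖y‖ ^ (-p)) ∂μ
      ≤ ∫⁻ y in S \ ball 0 R, ENNReal.ofReal (‖y‖ ^ (-p)) ∂μ + μ (ball 0 R) := by
  have hcover : S \ ball 0 1 ⊆ (S \ ball 0 R) ∪ (ball 0 R \ ball 0 1) := fun y hy ↦ by
    by_cases hyR : y ∈ ball (0 : G) R
    · exact Or.inr ⟨hyR, hy.2⟩
    · exact Or.inl ⟨hy.1, hyR⟩
  have hannulus : ∫⁻ y in ball 0 R \ ball 0 1, ENNReal.ofReal (‖y‖ ^ (-p)) ∂μ ≤ μ (ball 0 R) :=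
    calc ∫⁻ y in ball 0 R \ ball 0 1, ENNReal.ofReal (‖y‖ ^ (-p)) ∂μ
        ≤ ∫⁻ _ in ball 0 R \ ball 0 1, 1 ∂μ := setLIntegral_mono measurable_const fun y hy ↦
          ENNReal.ofReal_le_one.2 <|
            Real.rpow_le_one_of_one_le_of_nonpos (by simpa using hy.2) (neg_nonpos.2 hp)
      _ ≤ μ (ball 0 R) := by rw [setLIntegral_one]; exact measure_mono sdiff_subset
  calc _ ≤ ∫⁻ y in (S \ ball 0 R) ∪ (ball 0 R \ ball 0 1), ENNReal.ofReal (‖y‖ ^ (-p)) ∂μ :=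
        lintegral_mono_set hcover
    _ ≤ _ := (lintegral_union_le _ _ _).trans (by gcongr)

variable [OpensMeasurableSpace G] (ν : Measure G) {F S : Set G}

lemma setLIntegral_setLIntegral_rpow_neg_norm_sub_le (hF : F ⊆ closedBall 0 M)
    (hS : S ⊆ (ball 0 R)ᶜ) (hMR : M < R) (hp : 0 ≤ p) :
    ∫⁻ x in F, ∫⁻ y in S, ENNReal.ofReal (‖x - y‖ ^ (-p)) ∂ν ∂μ
      ≤ ENNReal.ofReal ((1 - M / R) ^ (-p)) * (∫⁻ y in S, ENNReal.ofReal (‖y‖ ^ (-p)) ∂ν)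
          * μ F := by
  rw [← setLIntegral_const]
  refine setLIntegral_mono measurable_const fun x hx ↦ ?_
  rw [← lintegral_const_mul' _ _ ENNReal.ofReal_ne_top]
  refine setLIntegral_mono (by fun_prop) fun y hy ↦ ?_
  rw [← ENNReal.ofReal_mul' (Real.rpow_nonneg (norm_nonneg y) _)]
  exact ENNReal.ofReal_le_ofReal <|
    rpow_neg_norm_sub_le (by simpa using hF hx) (by simpa using hS hy) hMR hp

lemma le_setLIntegral_setLIntegral_rpow_neg_norm_sub [MeasurableSub₂ G] [SFinite ν]
    (hF : F ⊆ closedBall 0 M) (hS : S ⊆ (ball 0 R)ᶜ) (hMR : M < R) (hp : 0 ≤ p) :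
    ENNReal.ofReal ((1 + M / R) ^ (-p)) * (∫⁻ y in S, ENNReal.ofReal (‖y‖ ^ (-p)) ∂ν) * μ F
      ≤ ∫⁻ x in F, ∫⁻ y in S, ENNReal.ofReal (‖x - y‖ ^ (-p)) ∂ν ∂μ := by
  rw [← setLIntegral_const]
  refine setLIntegral_mono (Measurable.lintegral_prod_right (by fun_prop)) fun x hx ↦ ?_
  rw [← lintegral_const_mul' _ _ ENNReal.ofReal_ne_top]
  refine setLIntegral_mono (by fun_prop) fun y hy ↦ ?_
  rw [← ENNReal.ofReal_mul' (Real.rpow_nonneg (norm_nonneg y) _)]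
  exact ENNReal.ofReal_le_ofReal <|
    rpow_neg_le_rpow_neg_norm_sub (by simpa using hF hx) (by simpa using hS hy) hMR hp

lemma toReal_setLIntegral_setLIntegral_rpow_neg_norm_sub_mem_Icc [MeasurableSub₂ G] [SFinite ν]
    (hM : 0 ≤ M) (hF : F ⊆ closedBall 0 M) (hS : S ⊆ (ball 0 R)ᶜ) (hMR : M < R) (hp : 0 ≤ p)
    (hSfin : ∫⁻ y in S, ENNReal.ofReal (‖y‖ ^ (-p)) ∂ν ≠ ∞) (hFfin : μ F ≠ ∞) :
    (∫⁻ x in F, ∫⁻ y in S, ENNReal.ofReal (‖x - y‖ ^ (-p)) ∂ν ∂μ).toReal ∈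
      Icc ((1 + M / R) ^ (-p) * (∫⁻ y in S, ENNReal.ofReal (‖y‖ ^ (-p)) ∂ν).toReal * (μ F).toReal)
        ((1 - M / R) ^ (-p) * (∫⁻ y in S, ENNReal.ofReal (‖y‖ ^ (-p)) ∂ν).toReal
          * (μ F).toReal) := by
  have hR : 0 < R := hM.trans_lt hMR
  have hsub_pos : 0 < 1 - M / R := by rw [sub_pos, div_lt_one hR]; exact hMR
  have hup := setLIntegral_setLIntegral_rpow_neg_norm_sub_le μ ν hF hS hMR hp
  have hlo := le_setLIntegral_setLIntegral_rpow_neg_norm_sub μ ν hF hS hMR hp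
  constructor
  · have hadd_nonneg : 0 ≤ 1 + M / R := by positivity
    simpa [ENNReal.toReal_mul, ENNReal.toReal_ofReal (Real.rpow_nonneg hadd_nonneg _)] using
      ENNReal.toReal_mono (ne_top_of_le_ne_top (by finiteness) hup) hlo
  · simpa [ENNReal.toReal_mul, ENNReal.toReal_ofReal (Real.rpow_nonneg hsub_pos.le _)] using
      ENNReal.toReal_mono (by finiteness) hup

end KernelComparison

lemma abs_mul_sub_le {a b j m A V κ₀ κ₁ : ℝ} (hb : 0 ≤ b) (hm : 0 ≤ m) (hba : b ≤ a)
    (haA : a ≤ A) (hab : a ≤ b + V) (hκ₀ : κ₀ ≤ 1) (hκ₁ : 1 ≤ κ₁)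
    (hj₀ : κ₀ * b * m ≤ j) (hj₁ : j ≤ κ₁ * b * m) :
    |a * m - j| ≤ (κ₁ - κ₀) * A * m + V * m := by
  have hbA : b * m ≤ A * m := mul_le_mul_of_nonneg_right (hba.trans haA) hm
  have hAm : 0 ≤ A * m := (mul_nonneg hb hm).trans hbA
  have hbma : b * m ≤ a * m := mul_le_mul_of_nonneg_right hba hm
  have hamb : a * m ≤ (b + V) * m := mul_le_mul_of_nonneg_right hab hm
  have h₀ := mul_nonneg (sub_nonneg.2 hκ₀) (sub_nonneg.2 hbA)
  have h₀' := mul_nonneg (sub_nonneg.2 hκ₀) hAm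
  have h₁ := mul_nonneg (sub_nonneg.2 hκ₁) (sub_nonneg.2 hbA)
  have h₁' := mul_nonneg (sub_nonneg.2 hκ₁) hAm
  rw [abs_le]
  constructor <;> linarith

lemma limsup_mem_Icc_of_le_add {α : Type*} {l : Filter α} [l.NeBot] {g u : α → ℝ} {c : ℝ}
    (hg : ∀ a, 0 ≤ g a) (hgu : ∀ᶠ a in l, g a ≤ c + u a) (hu : Tendsto u l (nhds 0)) :
    limsup g l ∈ Icc 0 c := by
  have hcu : Tendsto (fun a ↦ c + u a) l (nhds c) := by simpa using tendsto_const_nhds.add hu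
  have hbdd : IsBoundedUnder (· ≤ ·) l g := hcu.isBoundedUnder_le.mono_le hgu
  have hcobdd : IsCoboundedUnder (· ≤ ·) l g :=
    (isBoundedUnder_of_eventually_ge (Eventually.of_forall hg)).isCoboundedUnder_le
  refine ⟨le_limsup_of_frequently_le (Frequently.of_forall hg) hbdd, ?_⟩
  calc limsup g l ≤ limsup (fun a ↦ c + u a) l :=
        limsup_le_limsup hgu hcobdd hcu.isBoundedUnder_le
    _ = c := hcu.limsup_eq

lemma tendsto_one_sub_div_rpow_sub_one_add_div_rpow (M q : ℝ) :
    Tendsto (fun R : ℝ ↦ (1 - M / R) ^ q - (1 + M / R) ^ q) atTop (nhds 0) := by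
  have hMR : Tendsto (fun R : ℝ ↦ M / R) atTop (nhds 0) := tendsto_const_nhds.div_atTop tendsto_id
  have hsub := ((tendsto_const_nhds (x := (1 : ℝ))).sub hMR).rpow_const (p := q) (by simp)
  have hadd := ((tendsto_const_nhds (x := (1 : ℝ))).add hMR).rpow_const (p := q) (by simp)
  simpa using hsub.sub hadd

-- The paper's `α_s(E)`.
noncomputable def tailAlpha (n : ℕ) (s : ℝ) (E : Set (EuclideanSpace ℝ (Fin n))) : ℝ :=
  s * (∫⁻ y in E \ ball 0 1, ENNReal.ofReal (‖y‖ ^ (-((n : ℝ) + s)))).toReal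

lemma setLIntegral_diff_ball_one_rpow_neg_norm_le {n : ℕ} (E : Set (EuclideanSpace ℝ (Fin n)))
    {s : ℝ} (hs : 0 < s) :
    ∫⁻ y in E \ ball 0 1, ENNReal.ofReal (‖y‖ ^ (-((n : ℝ) + s)))
      ≤ ENNReal.ofReal (sphereArea n / s) :=
  (lintegral_mono_set (sdiff_subset_compl _ _)).trans_eq
    (lintegral_compl_ball_rpow_neg_norm_euclidean hs)

lemma tailAlpha_le_sphereArea {n : ℕ} (E : Set (EuclideanSpace ℝ (Fin n))) {s : ℝ}
    (hs : 0 < s) : tailAlpha n s E ≤ sphereArea n := by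
  have := ENNReal.toReal_mono ENNReal.ofReal_ne_top
    (setLIntegral_diff_ball_one_rpow_neg_norm_le E hs)
  rw [ENNReal.toReal_ofReal (by unfold sphereArea; positivity), le_div_iff₀ hs] at this
  rw [tailAlpha]
  linarith

lemma abs_tailAlpha_mul_sub_interL_le {n : ℕ} (E F : Set (EuclideanSpace ℝ (Fin n))) {M R s : ℝ}
    (hM : 0 ≤ M) (hFM : F ⊆ closedBall 0 M) (hMR : M < R) (hR : 1 ≤ R) (hs : 0 < s)
    (hs1 : s ≤ 1) :
    |tailAlpha n s E * (volume F).toReal - s * (interL n s F (E \ ball 0 R)).toReal|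
      ≤ ((1 - M / R) ^ (-((n : ℝ) + 1)) - (1 + M / R) ^ (-((n : ℝ) + 1))) * sphereArea n
          * (volume F).toReal + s * volume.real (ball (0 : EuclideanSpace ℝ (Fin n)) R)
          * (volume F).toReal := by
  have hαA := tailAlpha_le_sphereArea E hs
  rw [tailAlpha, interL]
  set p := (n : ℝ) + s
  have hp : 0 ≤ p := by positivity
  set I₁ := ∫⁻ y in E \ ball 0 1, ENNReal.ofReal (‖y‖ ^ (-p))
  set IR := ∫⁻ y in E \ ball 0 R, ENNReal.ofReal (‖y‖ ^ (-p))
  have hI₁top : I₁ ≠ ∞ :=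
    ne_top_of_le_ne_top ENNReal.ofReal_ne_top (setLIntegral_diff_ball_one_rpow_neg_norm_le E hs)
  have hIR : IR ≤ I₁ := lintegral_mono_set (sdiff_subset_sdiff_right (ball_subset_ball hR))
  have hIRtop : IR ≠ ∞ := ne_top_of_le_ne_top hI₁top hIR
  have hFtop : volume F ≠ ∞ := ((measure_mono hFM).trans_lt measure_closedBall_lt_top).ne
  have hJ := toReal_setLIntegral_setLIntegral_rpow_neg_norm_sub_mem_Icc volume volume hM hFM
    (sdiff_subset_compl E (ball 0 R)) hMR hp hIRtop hFtop
  have hsub_pos : 0 < 1 - M / R := by rw [sub_pos, div_lt_one (hM.trans_lt hMR)]; exact hMR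
  have hadd_ge : 1 ≤ 1 + M / R := le_add_of_nonneg_right (by positivity)
  have hκ₀ : (1 + M / R) ^ (-((n : ℝ) + 1)) ≤ (1 + M / R) ^ (-p) :=
    Real.rpow_le_rpow_of_exponent_le hadd_ge (by simp only [p]; linarith)
  have hκ₁ : (1 - M / R) ^ (-p) ≤ (1 - M / R) ^ (-((n : ℝ) + 1)) :=
    Real.rpow_le_rpow_of_exponent_ge hsub_pos (by linarith) (by simp only [p]; linarith)
  refine abs_mul_sub_le (b := s * IR.toReal) (by positivity) ENNReal.toReal_nonneg
    (mul_le_mul_of_nonneg_left (ENNReal.toReal_mono hI₁top hIR) hs.le) hαA ?_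
    (Real.rpow_le_one_of_one_le_of_nonpos hadd_ge (by linarith))
    (Real.one_le_rpow_of_pos_of_le_one_of_nonpos hsub_pos (by linarith) (by linarith)) ?_ ?_
  · have := ENNReal.toReal_mono (by finiteness) (setLIntegral_diff_ball_one_le volume E R hp)
    rw [ENNReal.toReal_add hIRtop measure_ball_lt_top.ne] at this
    rw [← mul_add, measureReal_def]
    exact mul_le_mul_of_nonneg_left this hs.le
  · calc _ = s * ((1 + M / R) ^ (-((n : ℝ) + 1)) * IR.toReal * (volume F).toReal) := by ring
      _ ≤ _ := by gcongr; exact le_trans (by gcongr) hJ.1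
  · calc _ ≤ s * ((1 - M / R) ^ (-p) * IR.toReal * (volume F).toReal) := by gcongr; exact hJ.2
      _ ≤ s * ((1 - M / R) ^ (-((n : ℝ) + 1)) * IR.toReal * (volume F).toReal) := by gcongr
      _ = _ := by ring

theorem stmt_6_general {n : ℕ} (E F : Set (EuclideanSpace ℝ (Fin n)))
    (hFb : Bornology.IsBounded F) :
    Tendsto (fun R : ℝ =>
      Filter.limsup (fun s : ℝ =>
        |(s * (∫⁻ y in E \ ball 0 1, ENNReal.ofReal (‖y‖ ^ (-((n : ℝ) + s)))).toReal)
            * (volume F).toReal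
          - s * (∫⁻ x in F, ∫⁻ y in E \ ball 0 R,
              ENNReal.ofReal (‖x - y‖ ^ (-((n : ℝ) + s)))).toReal|)
        (nhdsWithin 0 (Set.Ioi 0)))
      atTop (nhds 0) := by
  obtain ⟨M, hM, hFM⟩ := hFb.subset_closedBall_lt 0 0
  have hbound : ∀ᶠ R in atTop,
      limsup (fun s ↦ |tailAlpha n s E * (volume F).toReal
        - s * (interL n s F (E \ ball 0 R)).toReal|) (𝓝[>] 0) ∈ Icc 0
      (((1 - M / R) ^ (-((n : ℝ) + 1)) - (1 + M / R) ^ (-((n : ℝ) + 1))) * sphereArea n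
        * (volume F).toReal) := by
    filter_upwards [eventually_ge_atTop (M + 1)] with R hR
    refine limsup_mem_Icc_of_le_add (fun s ↦ abs_nonneg _) ?_
      ((((tendsto_id.mono_left nhdsWithin_le_nhds).mul_const
        (volume.real (ball (0 : EuclideanSpace ℝ (Fin n)) R))).mul_const (volume F).toReal).trans_eq
          (by simp))
    filter_upwards [Ioc_mem_nhdsGT one_pos] with s hs
    exact abs_tailAlpha_mul_sub_interL_le E F hM.le hFM (by linarith) (by linarith) hs.1 hs.2
  have hD := ((tendsto_one_sub_div_rpow_sub_one_add_div_rpow M (-((n : ℝ) + 1))).mul_const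
    (sphereArea n)).mul_const (volume F).toReal
  rw [zero_mul, zero_mul] at hD
  exact tendsto_of_tendsto_of_tendsto_of_le_of_le' tendsto_const_nhds hD
    (hbound.mono fun _ h ↦ h.1) (hbound.mono fun _ h ↦ h.2)

theorem stmt_6 {n : ℕ} (E F : Set (EuclideanSpace ℝ (Fin n)))
    (hE : MeasurableSet E) (hF : MeasurableSet F) (hFb : Bornology.IsBounded F) :
    Tendsto (fun R : ℝ =>
      Filter.limsup (fun s : ℝ =>
        |(s * (∫⁻ y in E \ ball 0 1, ENNReal.ofReal (‖y‖ ^ (-((n : ℝ) + s)))).toReal)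
            * (volume F).toReal
          - s * (∫⁻ x in F, ∫⁻ y in E \ ball 0 R,
              ENNReal.ofReal (‖x - y‖ ^ (-((n : ℝ) + s)))).toReal|)
        (nhdsWithin 0 (Set.Ioi 0)))
      atTop (nhds 0) :=
  stmt_6_general E F hFb
end

section
/- Let Ω ⊂ B_R ⊂ ℝⁿ be bounded open and F ⊆ Ω measurable with Per_{s₀}(F;Ω) < ∞ for some s₀ ∈ (0,1). Then lim_{s→0⁺} s·∫_F ∫_{B_R∖F} |x−y|^{-(n+s)} dx dy = 0. -/
open MeasureTheory Filter Metric Set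

/-!
For `0 < s ≤ s₀` the kernel `|x - y|^{-(n+s)}` is at most `|x - y|^{-(n+s₀)}` near the diagonal
and at most `1` away from it. Hence `L_s(F, B_R ∖ F) ≤ L_{s₀}(F, B_R ∖ F) + |F| |B_R ∖ F|`, and the
first term is bounded by `Per_{s₀}(F; Ω)` because `F ⊆ Ω`. So `L_s(F, B_R ∖ F)` stays bounded as
`s → 0⁺`, and multiplying by `s` sends it to `0`.
-/

lemma Real.rpow_neg_le_rpow_neg_add_one {a b r : ℝ} (ha : 0 < a) (hab : a ≤ b) (hr : 0 ≤ r) :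
    r ^ (-a) ≤ r ^ (-b) + 1 := by
  have hb_nonneg : 0 ≤ r ^ (-b) := Real.rpow_nonneg hr _
  rcases hr.eq_or_lt with rfl | hr_pos
  · rw [Real.zero_rpow (neg_ne_zero.mpr ha.ne')]
    linarith
  rcases le_or_gt r 1 with hr1 | hr1
  · linarith [Real.rpow_le_rpow_of_exponent_ge hr_pos hr1 (neg_le_neg hab)]
  · linarith [Real.rpow_le_one_of_one_le_of_nonpos hr1.le (neg_nonpos.mpr ha.le)]

namespace interL

variable {n : ℕ} {s s₀ : ℝ} {A B C : Set (EuclideanSpace ℝ (Fin n))}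

lemma measurable_lintegral_kernel (s : ℝ) (B : Set (EuclideanSpace ℝ (Fin n))) :
    Measurable fun x : EuclideanSpace ℝ (Fin n) =>
      ∫⁻ y in B, ENNReal.ofReal (‖x - y‖ ^ (-((n : ℝ) + s))) :=
  (ENNReal.measurable_ofReal.comp
    ((continuous_fst.sub continuous_snd).norm.measurable.pow_const _)).lintegral_prod_right'

lemma mono_right (h : B ⊆ C) : interL n s A B ≤ interL n s A C :=
  lintegral_mono fun _ => lintegral_mono_set h

lemma union_right_le : interL n s A (B ∪ C) ≤ interL n s A B + interL n s A C :=
  calc interL n s A (B ∪ C)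
      ≤ ∫⁻ x in A, ((∫⁻ y in B, ENNReal.ofReal (‖x - y‖ ^ (-((n : ℝ) + s))))
          + ∫⁻ y in C, ENNReal.ofReal (‖x - y‖ ^ (-((n : ℝ) + s)))) :=
        lintegral_mono fun _ => lintegral_union_le _ _ _
    _ = interL n s A B + interL n s A C :=
        lintegral_add_left (measurable_lintegral_kernel s B) _

lemma compl_le_fracPer {F Ω : Set (EuclideanSpace ℝ (Fin n))} (hFΩ : F ⊆ Ω) :
    interL n s F Fᶜ ≤ fracPer n s F Ω := by
  calc interL n s F Fᶜ = interL n s F ((Fᶜ ∩ Ω) ∪ (Fᶜ ∩ Ωᶜ)) := by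
        rw [← inter_union_distrib_left, union_compl_self, inter_univ]
    _ ≤ interL n s F (Fᶜ ∩ Ω) + interL n s F (Fᶜ ∩ Ωᶜ) := union_right_le
    _ ≤ fracPer n s F Ω := by
        rw [fracPer, inter_eq_left.mpr hFΩ]
        exact le_self_add

lemma le_add_volume_mul (hs : 0 < s) (hss₀ : s ≤ s₀) :
    interL n s A B ≤ interL n s₀ A B + volume A * volume B := by
  have hkernel : ∀ x y : EuclideanSpace ℝ (Fin n),
      ENNReal.ofReal (‖x - y‖ ^ (-((n : ℝ) + s)))
        ≤ ENNReal.ofReal (‖x - y‖ ^ (-((n : ℝ) + s₀))) + 1 := fun x y => by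
    rw [← ENNReal.ofReal_one, ← ENNReal.ofReal_add (by positivity) zero_le_one]
    exact ENNReal.ofReal_le_ofReal <|
      Real.rpow_neg_le_rpow_neg_add_one (by positivity) (by linarith) (norm_nonneg _)
  calc interL n s A B
      ≤ ∫⁻ x in A, ∫⁻ y in B, (ENNReal.ofReal (‖x - y‖ ^ (-((n : ℝ) + s₀))) + 1) :=
        lintegral_mono fun x => lintegral_mono fun y => hkernel x y
    _ = interL n s₀ A B + volume A * volume B := by
        simp_rw [lintegral_add_right _ measurable_const, lintegral_const,
          Measure.restrict_apply_univ, one_mul, mul_comm (volume A)]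
        rfl

end interL

lemma tendsto_mul_toReal_nhdsGT_zero {f : ℝ → ENNReal} {C : ENNReal} (hC : C ≠ ⊤) {ε : ℝ}
    (hε : 0 < ε) (hf : ∀ s ∈ Ioo 0 ε, f s ≤ C) :
    Tendsto (fun s => s * (f s).toReal) (nhdsWithin 0 (Ioi 0)) (nhds 0) := by
  have hlim : Tendsto (fun s : ℝ => s * C.toReal) (nhdsWithin 0 (Ioi 0)) (nhds 0) := by
    simpa using ((continuous_mul_const C.toReal).tendsto 0).mono_left nhdsWithin_le_nhds
  refine squeeze_zero' ?_ ?_ hlim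
  · filter_upwards [self_mem_nhdsWithin] with s hs
    exact mul_nonneg (le_of_lt hs) ENNReal.toReal_nonneg
  · filter_upwards [Ioo_mem_nhdsGT hε] with s hs
    exact mul_le_mul_of_nonneg_left (ENNReal.toReal_mono hC (hf s hs)) hs.1.le

theorem stmt_8_general {n : ℕ} (Ω F : Set (EuclideanSpace ℝ (Fin n))) (R : ℝ)
    (hΩR : Ω ⊆ ball 0 R) (hFΩ : F ⊆ Ω)
    (s₀ : ℝ) (hs₀ : s₀ ∈ Set.Ioo (0 : ℝ) 1) (hfin : fracPer n s₀ F Ω ≠ ⊤) :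
    Tendsto (fun s : ℝ => s * (interL n s F (ball 0 R \ F)).toReal)
      (nhdsWithin 0 (Set.Ioi 0)) (nhds 0) := by
  have hL₀ : interL n s₀ F (ball 0 R \ F) ≠ ⊤ :=
    ne_top_of_le_ne_top hfin <|
      (interL.mono_right fun _ hy => hy.2).trans (interL.compl_le_fracPer hFΩ)
  have hvol : volume F * volume (ball (0 : EuclideanSpace ℝ (Fin n)) R \ F) ≠ ⊤ :=
    ENNReal.mul_ne_top ((measure_mono (hFΩ.trans hΩR)).trans_lt measure_ball_lt_top).ne
      ((measure_mono sdiff_subset).trans_lt measure_ball_lt_top).ne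
  exact tendsto_mul_toReal_nhdsGT_zero (ENNReal.add_ne_top.mpr ⟨hL₀, hvol⟩) hs₀.1
    fun s hs => interL.le_add_volume_mul hs.1 hs.2.le

theorem stmt_8 {n : ℕ} (Ω F : Set (EuclideanSpace ℝ (Fin n))) (R : ℝ)
    (hΩo : IsOpen Ω) (hΩb : Bornology.IsBounded Ω) (hΩR : Ω ⊆ ball 0 R)
    (hF : MeasurableSet F) (hFΩ : F ⊆ Ω)
    (s₀ : ℝ) (hs₀ : s₀ ∈ Set.Ioo (0 : ℝ) 1) (hfin : fracPer n s₀ F Ω ≠ ⊤) :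
    Tendsto (fun s : ℝ => s * (interL n s F (ball 0 R \ F)).toReal)
      (nhdsWithin 0 (Set.Ioi 0)) (nhds 0) :=
  stmt_8_general Ω F R hΩR hFΩ s₀ hs₀ hfin
end

section
/- Let E be a measurable subset of a bounded open set Ω ⊂ ℝⁿ with Per_{s₀}(E;Ω) < ∞ for some s₀ ∈ (0,1). Then lim_{s→0⁺} s·Per_s(E;Ω) = H^{n-1}(S^{n-1})·|E|. -/
open MeasureTheory Filter Metric Set

open Topology

/-! Split the interaction `∫_E ∫_{Eᶜ} |x - y|^{-(n+s)}` according to whether `|x - y| ≥ 1`.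
Since `∫_{|z| ≥ 1} |z|^{-(n+s)} dz = H^{n-1}(S^{n-1}) / s`, the far part is at most
`H^{n-1}(S^{n-1}) |E| / s`, and falls short of it by at most `|E|²` because the kernel is at most
`1` there. The near part only grows as `s` increases, so for `s ≤ s₀` it is bounded by
`Per_{s₀}(E; Ω) < ∞`. Hence `s · Per_s(E; Ω) = H^{n-1}(S^{n-1}) |E| + O(s)`. -/

theorem lintegral_compl_unitBall_rpow_neg {E : Type*} [NormedAddCommGroup E] [NormedSpace ℝ E]
    [FiniteDimensional ℝ E] [MeasurableSpace E] [BorelSpace E] (μ : Measure E)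
    [μ.IsAddHaarMeasure] {p : ℝ} (hp : Module.finrank ℝ E < p) :
    ∫⁻ x in (ball (0 : E) 1)ᶜ, ENNReal.ofReal (‖x‖ ^ (-p)) ∂μ =
      ENNReal.ofReal (Module.finrank ℝ E * μ.real (ball 0 1) / (p - Module.finrank ℝ E)) := by
  rcases subsingleton_or_nontrivial E with hE | hE
  · have : (ball (0 : E) 1)ᶜ = ∅ := by
      simpa using eq_univ_of_forall fun x : E => by simp [Subsingleton.elim x 0]
    simp [this, Module.finrank_zero_of_subsingleton]
  set d := Module.finrank ℝ E
  have hd : 1 ≤ d := Module.finrank_pos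
  set g : ℝ → ℝ := (Ici 1).indicator fun r => r ^ (-p)
  have hexp : (d : ℝ) - 1 - p < -1 := by linarith
  have hradial : EqOn (fun y : ℝ => y ^ (d - 1) • g y)
      ((Ici 1).indicator fun y => y ^ ((d : ℝ) - 1 - p)) (Ioi 0) := by
    intro y (hy : 0 < y)
    by_cases hy1 : y ∈ Ici 1
    · simp only [g, indicator_of_mem hy1, smul_eq_mul]
      rw [← Real.rpow_natCast, ← Real.rpow_add hy, Nat.cast_sub hd, Nat.cast_one]
      ring_nf
    · simp [g, indicator_of_notMem hy1]
  have hint : IntegrableOn ((Ici 1).indicator fun y : ℝ => y ^ ((d : ℝ) - 1 - p)) (Ioi 0) := by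
    rw [IntegrableOn, integrable_indicator_iff measurableSet_Ici, IntegrableOn,
      Measure.restrict_restrict measurableSet_Ici, inter_eq_left.2 (Ici_subset_Ioi.2 one_pos),
      ← IntegrableOn, integrableOn_Ici_iff_integrableOn_Ioi]
    exact integrableOn_Ioi_rpow_of_lt hexp one_pos
  have hg : ∫⁻ x in (ball (0 : E) 1)ᶜ, ENNReal.ofReal (‖x‖ ^ (-p)) ∂μ =
      ∫⁻ x, ENNReal.ofReal (g ‖x‖) ∂μ := by
    rw [← lintegral_indicator measurableSet_ball.compl]
    refine lintegral_congr fun x => ?_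
    by_cases hx : 1 ≤ ‖x‖ <;> simp [g, hx]
  have hintegrable : Integrable (fun x : E => g ‖x‖) μ :=
    (integrable_fun_norm_addHaar μ).2 ((integrableOn_congr_fun hradial measurableSet_Ioi).2 hint)
  rw [hg, ← ofReal_integral_eq_lintegral_ofReal hintegrable (ae_of_all _ fun x => ?_),
    integral_fun_norm_addHaar, setIntegral_congr_fun measurableSet_Ioi hradial]
  · rw [setIntegral_indicator measurableSet_Ici, inter_eq_right.2 (Ici_subset_Ioi.2 one_pos),
      integral_Ici_eq_integral_Ioi, integral_Ioi_rpow_of_lt hexp one_pos, Real.one_rpow,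
      show (d : ℝ) - 1 - p + 1 = -(p - d) by ring, neg_div_neg_eq, nsmul_eq_mul, smul_eq_mul,
      ← mul_div_assoc, mul_one, mul_div_assoc]
  · exact indicator_nonneg (fun r (hr : 1 ≤ r) => by positivity) _

theorem lintegral_compl_ball_comp_norm_sub {G : Type*} [NormedAddCommGroup G]
    [MeasurableSpace G] [MeasurableAdd G] (μ : Measure G) [μ.IsAddRightInvariant]
    (f : ℝ → ENNReal) (x : G) (r : ℝ) :
    ∫⁻ y in (ball x r)ᶜ, f ‖x - y‖ ∂μ = ∫⁻ z in (ball 0 r)ᶜ, f ‖z‖ ∂μ := by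
  have hpre : (fun y => y - x) ⁻¹' (ball 0 r)ᶜ = (ball x r)ᶜ := by
    ext y
    simp only [mem_preimage, mem_compl_iff, mem_ball, dist_eq_norm, sub_zero]
  simpa only [hpre, norm_sub_rev x] using
    (measurePreserving_sub_right μ x).setLIntegral_comp_preimage_emb
      (measurableEmbedding_subRight x) (fun z => f ‖z‖) (ball 0 r)ᶜ

theorem ofReal_norm_sub_rpow_neg_le_indicator_add {G : Type*} [NormedAddCommGroup G] {p q : ℝ}
    (hp : 0 < p) (hpq : p ≤ q) (x y : G) :
    ENNReal.ofReal (‖x - y‖ ^ (-p)) ≤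
      (ball x 1)ᶜ.indicator (fun y => ENNReal.ofReal (‖x - y‖ ^ (-p))) y +
        ENNReal.ofReal (‖x - y‖ ^ (-q)) := by
  by_cases hy : y ∈ ball x 1
  · rw [indicator_of_notMem (not_not_intro hy), zero_add]
    rcases (norm_nonneg (x - y)).eq_or_lt with h0 | h0
    · rw [← h0, Real.zero_rpow (by linarith)]
      simp
    · refine ENNReal.ofReal_le_ofReal (Real.rpow_le_rpow_of_exponent_ge h0 ?_ (by linarith))
      rw [norm_sub_rev, ← dist_eq_norm]
      exact (mem_ball.1 hy).le
  · rw [indicator_of_mem hy]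
    exact le_self_add

section

variable {G : Type*} [NormedAddCommGroup G] [MeasurableSpace G] [BorelSpace G]

theorem lintegral_rpow_neg_le_compl_ball_add (μ : Measure G) (x : G) (A : Set G) {p q : ℝ}
    (hp : 0 < p) (hpq : p ≤ q) :
    ∫⁻ y in A, ENNReal.ofReal (‖x - y‖ ^ (-p)) ∂μ ≤
      ∫⁻ y in (ball x 1)ᶜ, ENNReal.ofReal (‖x - y‖ ^ (-p)) ∂μ +
        ∫⁻ y in A, ENNReal.ofReal (‖x - y‖ ^ (-q)) ∂μ :=
  calc ∫⁻ y in A, ENNReal.ofReal (‖x - y‖ ^ (-p)) ∂μ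
      ≤ ∫⁻ y in A, ((ball x 1)ᶜ.indicator (fun y => ENNReal.ofReal (‖x - y‖ ^ (-p))) y +
          ENNReal.ofReal (‖x - y‖ ^ (-q))) ∂μ :=
        lintegral_mono fun y => ofReal_norm_sub_rpow_neg_le_indicator_add hp hpq x y
    _ = ∫⁻ y in (ball x 1)ᶜ ∩ A, ENNReal.ofReal (‖x - y‖ ^ (-p)) ∂μ +
          ∫⁻ y in A, ENNReal.ofReal (‖x - y‖ ^ (-q)) ∂μ := by
        rw [lintegral_add_left ((by fun_prop : Measurable _).indicator measurableSet_ball.compl),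
          setLIntegral_indicator measurableSet_ball.compl]
    _ ≤ _ := by gcongr; exact inter_subset_left

theorem lintegral_compl_ball_rpow_neg_le (μ : Measure G) (x : G) {A : Set G}
    (hA : MeasurableSet A) {p : ℝ} (hp : 0 ≤ p) :
    ∫⁻ y in (ball x 1)ᶜ, ENNReal.ofReal (‖x - y‖ ^ (-p)) ∂μ ≤
      ∫⁻ y in Aᶜ, ENNReal.ofReal (‖x - y‖ ^ (-p)) ∂μ + μ A :=
  calc ∫⁻ y in (ball x 1)ᶜ, ENNReal.ofReal (‖x - y‖ ^ (-p)) ∂μ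
      ≤ ∫⁻ y in (ball x 1)ᶜ, (Aᶜ.indicator (fun y => ENNReal.ofReal (‖x - y‖ ^ (-p))) y +
          A.indicator 1 y) ∂μ := by
        refine setLIntegral_mono' measurableSet_ball.compl fun y hy => ?_
        by_cases hyA : y ∈ A
        · rw [indicator_of_mem hyA, Pi.one_apply, ← ENNReal.ofReal_one]
          refine le_add_left (ENNReal.ofReal_le_ofReal
            (Real.rpow_le_one_of_one_le_of_nonpos ?_ (neg_nonpos.2 hp)))
          rw [norm_sub_rev, ← dist_eq_norm]
          exact not_lt.1 hy
        · rw [indicator_of_mem (mem_compl hyA)]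
          exact le_self_add
    _ ≤ ∫⁻ y, (Aᶜ.indicator (fun y => ENNReal.ofReal (‖x - y‖ ^ (-p))) y +
          A.indicator 1 y) ∂μ :=
        setLIntegral_le_lintegral _ _
    _ = ∫⁻ y in Aᶜ, ENNReal.ofReal (‖x - y‖ ^ (-p)) ∂μ + μ A := by
        rw [lintegral_add_left ((by fun_prop : Measurable _).indicator hA.compl),
          lintegral_indicator hA.compl, lintegral_indicator_one hA]

theorem lintegral_lintegral_compl_rpow_neg_le [MeasurableAdd G] (μ : Measure G)
    [μ.IsAddRightInvariant] (A : Set G) {p q : ℝ} (hp : 0 < p) (hpq : p ≤ q) :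
    ∫⁻ x in A, ∫⁻ y in Aᶜ, ENNReal.ofReal (‖x - y‖ ^ (-p)) ∂μ ∂μ ≤
      (∫⁻ z in (ball 0 1)ᶜ, ENNReal.ofReal (‖z‖ ^ (-p)) ∂μ) * μ A +
        ∫⁻ x in A, ∫⁻ y in Aᶜ, ENNReal.ofReal (‖x - y‖ ^ (-q)) ∂μ ∂μ := by
  rw [← setLIntegral_const, ← lintegral_add_left measurable_const]
  refine lintegral_mono fun x => ?_
  rw [← lintegral_compl_ball_comp_norm_sub μ (fun t => ENNReal.ofReal (t ^ (-p))) x]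
  exact lintegral_rpow_neg_le_compl_ball_add μ x Aᶜ hp hpq

theorem mul_measure_le_lintegral_lintegral_compl_rpow_neg [MeasurableAdd G] (μ : Measure G)
    [μ.IsAddRightInvariant] {A : Set G} (hA : MeasurableSet A) {p : ℝ} (hp : 0 ≤ p) :
    (∫⁻ z in (ball 0 1)ᶜ, ENNReal.ofReal (‖z‖ ^ (-p)) ∂μ) * μ A ≤
      ∫⁻ x in A, ∫⁻ y in Aᶜ, ENNReal.ofReal (‖x - y‖ ^ (-p)) ∂μ ∂μ + μ A * μ A := by
  rw [← setLIntegral_const, ← setLIntegral_const A (μ A),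
    ← lintegral_add_right _ measurable_const]
  refine lintegral_mono fun x => ?_
  rw [← lintegral_compl_ball_comp_norm_sub μ (fun t => ENNReal.ofReal (t ^ (-p))) x]
  exact lintegral_compl_ball_rpow_neg_le μ x hA hp

end

theorem tendsto_mul_toReal_nhdsGT_zero_of_le {g : ℝ → ENNReal} {c : ℝ} (hc : 0 ≤ c)
    {C D : ENNReal} (hC : C ≠ ⊤) (hD : D ≠ ⊤)
    (h : ∀ᶠ s in 𝓝[>] 0,
      ENNReal.ofReal (c / s) ≤ g s + C ∧ g s ≤ ENNReal.ofReal (c / s) + D) :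
    Tendsto (fun s => s * (g s).toReal) (𝓝[>] 0) (𝓝 c) := by
  have hlim (a : ℝ) : Tendsto (fun s : ℝ => c + s * a) (𝓝[>] 0) (𝓝 c) := by
    have : Continuous fun s : ℝ => c + s * a := by fun_prop
    simpa using (this.tendsto 0).mono_left nhdsWithin_le_nhds
  have hbounds : ∀ᶠ s in 𝓝[>] 0,
      c + s * -C.toReal ≤ s * (g s).toReal ∧ s * (g s).toReal ≤ c + s * D.toReal := by
    filter_upwards [h, self_mem_nhdsWithin] with s ⟨hlow, hupp⟩ (hs : 0 < s)
    have hg : g s ≠ ⊤ := ne_top_of_le_ne_top (by finiteness) hupp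
    replace hlow := ENNReal.toReal_mono (by finiteness) hlow
    replace hupp := ENNReal.toReal_mono (by finiteness) hupp
    rw [ENNReal.toReal_add hg hC, ENNReal.toReal_ofReal (by positivity), div_le_iff₀' hs]
      at hlow
    rw [ENNReal.toReal_add ENNReal.ofReal_ne_top hD, ENNReal.toReal_ofReal (by positivity),
      ← sub_le_iff_le_add, le_div_iff₀' hs] at hupp
    constructor <;> nlinarith
  exact tendsto_of_tendsto_of_tendsto_of_le_of_le' (hlim _) (hlim _)
    (hbounds.mono fun _ h => h.1) (hbounds.mono fun _ h => h.2)

theorem sphereArea_nonneg (n : ℕ) : 0 ≤ sphereArea n := by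
  unfold sphereArea
  positivity

theorem lintegral_compl_unitBall_rpow_neg_eq_sphereArea_div {n : ℕ} {s : ℝ} (hs : 0 < s) :
    ∫⁻ z in (ball (0 : EuclideanSpace ℝ (Fin n)) 1)ᶜ, ENNReal.ofReal (‖z‖ ^ (-((n : ℝ) + s))) =
      ENNReal.ofReal (sphereArea n / s) := by
  rw [lintegral_compl_unitBall_rpow_neg volume (by simpa using hs), finrank_euclideanSpace_fin,
    add_sub_cancel_left]
  rfl

theorem fracPer_eq_interL_compl {n : ℕ} (s : ℝ) {E Ω : Set (EuclideanSpace ℝ (Fin n))}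
    (hE : MeasurableSet E) (hΩ : MeasurableSet Ω) (hEΩ : E ⊆ Ω) :
    fracPer n s E Ω = interL n s E Eᶜ := by
  rw [fracPer, inter_eq_left.2 hEΩ, (disjoint_compl_right.mono_left hEΩ).inter_eq,
    interL, interL, interL, interL, Measure.restrict_empty, lintegral_zero_measure, add_zero,
    ← lintegral_add_left (Measurable.lintegral_prod_right'
      (f := fun z : _ × _ => ENNReal.ofReal (‖z.1 - z.2‖ ^ (-((n : ℝ) + s)))) (by fun_prop))]
  refine lintegral_congr fun x => ?_
  rw [← lintegral_union (hE.compl.inter hΩ.compl)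
    (disjoint_compl_right.mono inter_subset_right inter_subset_right), inter_union_compl]

theorem stmt_11 {n : ℕ} (Ω E : Set (EuclideanSpace ℝ (Fin n)))
    (hΩo : IsOpen Ω) (hΩb : Bornology.IsBounded Ω)
    (hE : MeasurableSet E) (hEΩ : E ⊆ Ω)
    (s₀ : ℝ) (hs₀ : s₀ ∈ Set.Ioo (0 : ℝ) 1) (hfin : fracPer n s₀ E Ω ≠ ⊤) :
    Tendsto (fun s : ℝ => s * (fracPer n s E Ω).toReal)
      (nhdsWithin 0 (Set.Ioi 0)) (nhds (sphereArea n * (volume E).toReal)) := by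
  have hEfin : volume E ≠ ⊤ := ((measure_mono hEΩ).trans_lt hΩb.measure_lt_top).ne
  simp_rw [fracPer_eq_interL_compl _ hE hΩo.measurableSet hEΩ] at hfin ⊢
  refine tendsto_mul_toReal_nhdsGT_zero_of_le
    (mul_nonneg (sphereArea_nonneg n) ENNReal.toReal_nonneg)
    (C := volume E * volume E) (by finiteness) hfin ?_
  filter_upwards [Ioc_mem_nhdsGT_of_mem ⟨le_rfl, hs₀.1⟩] with s ⟨hs, hss₀⟩
  have hconst : ENNReal.ofReal (sphereArea n * (volume E).toReal / s) =
      (∫⁻ z in (ball (0 : EuclideanSpace ℝ (Fin n)) 1)ᶜ,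
        ENNReal.ofReal (‖z‖ ^ (-((n : ℝ) + s)))) * volume E := by
    rw [lintegral_compl_unitBall_rpow_neg_eq_sphereArea_div hs, mul_div_right_comm,
      ENNReal.ofReal_mul (div_nonneg (sphereArea_nonneg n) hs.le), ENNReal.ofReal_toReal hEfin]
  rw [hconst]
  exact ⟨mul_measure_le_lintegral_lintegral_compl_rpow_neg volume hE (by positivity),
    lintegral_lintegral_compl_rpow_neg_le volume E (by positivity) (by linarith)⟩
end

section
/- There exists a measurable set E ⊆ Ω = (0,M) ⊂ ℝ with Per_s(E;Ω) = +∞ for every s ∈ (0,1). Specifically, with β₁ = 1/log²2, β_k = 1/(k·log²k) for k ≥ 2, M = Σβ_k, σ_m = Σ_{k=1}^m β_k, I_m = (σ_m, σ_{m+1}), and E = ∪_{j≥1} I_{2j}, the one-dimensional fractional perimeter satisfies Per_s(E;Ω) ≥ (1/(1−s))·Σ_{j≥1} β_{2j+2}^{1-s} = +∞ for all s ∈ (0,1). -/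
open MeasureTheory Filter Set

noncomputable def interL1 (s : ℝ) (A B : Set ℝ) : ENNReal :=
  ∫⁻ x in A, ∫⁻ y in B, ENNReal.ofReal (|x - y| ^ (-(1 + s)))

noncomputable def fracPer1 (s : ℝ) (E Ω : Set ℝ) : ENNReal :=
  interL1 s (E ∩ Ω) (Eᶜ ∩ Ω) + interL1 s (E ∩ Ω) (Eᶜ ∩ Ωᶜ) + interL1 s (E ∩ Ωᶜ) (Eᶜ ∩ Ω)

/-- β₁ = 1/log²2 and β_k = 1/(k log²k) for k ≥ 2. -/
noncomputable def betaSeq (k : ℕ) : ℝ :=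
  if k < 2 then 1 / (Real.log 2) ^ 2 else 1 / (k * (Real.log k) ^ 2)

noncomputable def sigmaSeq (m : ℕ) : ℝ := ∑ k ∈ Finset.range m, betaSeq (k + 1)

noncomputable def Mtot : ℝ := ∑' k : ℕ, betaSeq (k + 1)

/-- E = ⋃_{j ≥ 1} I_{2j} with I_m = (σ_m, σ_{m+1}). -/
def badSet : Set ℝ := ⋃ j : ℕ, Set.Ioo (sigmaSeq (2 * (j + 1))) (sigmaSeq (2 * (j + 1) + 1))

/-! The intervals `I_m = (σ_m, σ_{m+1})` have lengths `β_{m+1}`, which are nonincreasing and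
summable by Cauchy condensation, so `E ⊆ (0, M)`. Each component `I_{2j+2}` of `E` is adjacent to
the gap `I_{2j+1} ⊆ Eᶜ ∩ Ω`, which is at least as long, and two adjacent intervals of length `ℓ`
interact at least `2^{-(1+s)} ℓ^{1-s}`, the kernel being `≥ (2ℓ)^{-(1+s)}` on them. Finally
`log k ≤ k^ε / ε` gives `β_k ≥ ε² k^{-(1+2ε)}`, so `∑ β_{2j+3}^{1-s}` diverges for `s ∈ (0,1)`. -/

open scoped ENNReal
open Function

section Interaction

variable {s : ℝ}

lemma interL1_mono {A A' B B' : Set ℝ} (hA : A ⊆ A') (hB : B ⊆ B') :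
    interL1 s A B ≤ interL1 s A' B' :=
  (lintegral_mono fun _ => lintegral_mono_set hB).trans (lintegral_mono_set hA)

lemma tsum_interL1_le {A B : ℕ → Set ℝ} (hA : ∀ j, MeasurableSet (A j))
    (hdisj : Pairwise (Disjoint on A)) {A' B' : Set ℝ} (hAA' : ⋃ j, A j ⊆ A')
    (hBB' : ∀ j, B j ⊆ B') :
    ∑' j, interL1 s (A j) (B j) ≤ interL1 s A' B' :=
  calc ∑' j, interL1 s (A j) (B j)
      ≤ ∑' j, interL1 s (A j) B' := ENNReal.tsum_le_tsum fun j => interL1_mono le_rfl (hBB' j)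
    _ = interL1 s (⋃ j, A j) B' := (lintegral_iUnion hA hdisj _).symm
    _ ≤ interL1 s A' B' := interL1_mono hAA' le_rfl

lemma ofReal_le_interL1_Ioo (hs : -1 ≤ s) (a : ℝ) {ℓ : ℝ} (hℓ : 0 < ℓ) :
    ENNReal.ofReal (2 ^ (-(1 + s)) * ℓ ^ (1 - s)) ≤ interL1 s (Ioo a (a + ℓ)) (Ioo (a - ℓ) a) := by
  have hkernel : ∀ x ∈ Ioo a (a + ℓ), ∀ y ∈ Ioo (a - ℓ) a,
      ENNReal.ofReal ((2 * ℓ) ^ (-(1 + s))) ≤ ENNReal.ofReal (|x - y| ^ (-(1 + s))) := by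
    rintro x ⟨hax, hxa⟩ y ⟨hya, hay⟩
    rw [abs_of_pos (by linarith)]
    exact ENNReal.ofReal_le_ofReal
      (Real.rpow_le_rpow_of_nonpos (by linarith) (by linarith) (by linarith))
  have hconst : 2 ^ (-(1 + s)) * ℓ ^ (1 - s) = (2 * ℓ) ^ (-(1 + s)) * ℓ * ℓ := by
    have hsplit : ℓ ^ (1 - s) = ℓ ^ (-(1 + s)) * ℓ ^ (2 : ℝ) := by
      rw [← Real.rpow_add hℓ]; ring_nf
    rw [hsplit, Real.rpow_two, Real.mul_rpow zero_le_two hℓ.le]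
    ring
  calc ENNReal.ofReal (2 ^ (-(1 + s)) * ℓ ^ (1 - s))
      = ∫⁻ _ in Ioo a (a + ℓ), ∫⁻ _ in Ioo (a - ℓ) a, ENNReal.ofReal ((2 * ℓ) ^ (-(1 + s))) := by
        rw [setLIntegral_const, setLIntegral_const, Real.volume_Ioo, Real.volume_Ioo, hconst,
          ENNReal.ofReal_mul (by positivity), ENNReal.ofReal_mul (by positivity)]
        ring_nf
    _ ≤ interL1 s (Ioo a (a + ℓ)) (Ioo (a - ℓ) a) :=
        setLIntegral_mono' measurableSet_Ioo fun x hx =>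
          setLIntegral_mono' measurableSet_Ioo fun y hy => hkernel x hx y hy

end Interaction

lemma ENNReal.tsum_ofReal_eq_top {ι : Type*} {f : ι → ℝ} (hf : ∀ i, 0 ≤ f i)
    (h : ¬Summable f) : ∑' i, ENNReal.ofReal (f i) = ∞ := by
  by_contra hne
  exact h ((ENNReal.summable_toReal hne).congr fun i => ENNReal.toReal_ofReal (hf i))

lemma betaSeq_of_two_le {k : ℕ} (hk : 2 ≤ k) : betaSeq k = 1 / ((k : ℝ) * Real.log k ^ 2) := by
  rw [betaSeq, if_neg (by omega)]

lemma betaSeq_pos (k : ℕ) : 0 < betaSeq k := by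
  unfold betaSeq
  split_ifs with hk
  · positivity
  · have hk' : (2 : ℝ) ≤ k := by exact_mod_cast not_lt.mp hk
    have : 0 < Real.log k := Real.log_pos (by linarith)
    positivity

lemma betaSeq_succ_le {k : ℕ} (hk : 1 ≤ k) : betaSeq (k + 1) ≤ betaSeq k := by
  obtain rfl | hk2 := hk.eq_or_lt
  · rw [betaSeq_of_two_le le_rfl, betaSeq, if_pos one_lt_two]
    push_cast
    gcongr
    linarith [sq_nonneg (Real.log 2)]
  · rw [betaSeq_of_two_le hk2, betaSeq_of_two_le (by omega)]
    have hk' : (2 : ℝ) ≤ k := by exact_mod_cast hk2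
    have hlog : 0 < Real.log k := Real.log_pos (by linarith)
    push_cast
    gcongr <;> linarith

lemma betaSeq_antitoneOn : AntitoneOn betaSeq {k | 1 ≤ k} :=
  antitoneOn_nat_Ici_of_succ_le fun _ hk => betaSeq_succ_le hk

lemma summable_betaSeq : Summable betaSeq := by
  rw [← summable_condensed_iff_of_nonneg (fun n => (betaSeq_pos n).le)
    fun m n hm hmn => betaSeq_antitoneOn (Nat.one_le_iff_ne_zero.mpr hm.ne') (hm.trans_le hmn) hmn,
    ← summable_nat_add_iff 1]
  have hcondensed (k : ℕ) : (2 : ℝ) ^ (k + 1) * betaSeq (2 ^ (k + 1))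
      = 1 / Real.log 2 ^ 2 * (1 / ((k + 1 : ℕ) : ℝ) ^ 2) := by
    rw [betaSeq_of_two_le (Nat.le_self_pow (by omega) 2)]
    push_cast
    rw [Real.log_pow]
    field_simp
    push_cast
    ring
  simp_rw [hcondensed]
  exact ((summable_nat_add_iff 1).mpr
    (Real.summable_one_div_nat_pow.mpr one_lt_two)).mul_left _

lemma sigmaSeq_succ (m : ℕ) : sigmaSeq (m + 1) = sigmaSeq m + betaSeq (m + 1) :=
  Finset.sum_range_succ _ _

lemma sigmaSeq_strictMono : StrictMono sigmaSeq :=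
  strictMono_nat_of_lt_succ fun m => by
    rw [sigmaSeq_succ]; exact lt_add_of_pos_right _ (betaSeq_pos _)

lemma sigmaSeq_nonneg (m : ℕ) : 0 ≤ sigmaSeq m :=
  Finset.sum_nonneg fun _ _ => (betaSeq_pos _).le

lemma sigmaSeq_le_Mtot (m : ℕ) : sigmaSeq m ≤ Mtot :=
  ((summable_nat_add_iff 1).mpr summable_betaSeq).sum_le_tsum _
    (fun _ _ => (betaSeq_pos _).le)

noncomputable def sigmaIoo (m : ℕ) : Set ℝ := Ioo (sigmaSeq m) (sigmaSeq (m + 1))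

lemma badSet_eq_iUnion : badSet = ⋃ j : ℕ, sigmaIoo (2 * j + 2) := rfl

lemma pairwise_disjoint_sigmaIoo : Pairwise (Disjoint on sigmaIoo) :=
  sigmaSeq_strictMono.monotone.pairwise_disjoint_on_Ioo_succ

lemma sigmaIoo_subset_Ioo_Mtot (m : ℕ) : sigmaIoo m ⊆ Ioo 0 Mtot :=
  Ioo_subset_Ioo (sigmaSeq_nonneg m) (sigmaSeq_le_Mtot _)

lemma badSet_subset_Ioo_Mtot : badSet ⊆ Ioo 0 Mtot :=
  iUnion_subset fun _ => sigmaIoo_subset_Ioo_Mtot _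

lemma sigmaIoo_odd_subset_compl_badSet (j : ℕ) : sigmaIoo (2 * j + 1) ⊆ badSetᶜ := by
  rw [badSet_eq_iUnion, subset_compl_iff_disjoint_right, disjoint_iUnion_right]
  exact fun i => pairwise_disjoint_sigmaIoo (by omega)

lemma ofReal_le_interL1_sigmaIoo {s : ℝ} (hs : -1 ≤ s) (m : ℕ) :
    ENNReal.ofReal (2 ^ (-(1 + s)) * betaSeq (m + 2) ^ (1 - s)) ≤
      interL1 s (sigmaIoo (m + 1)) (sigmaIoo m) := by
  have hright :
      sigmaIoo (m + 1) = Ioo (sigmaSeq (m + 1)) (sigmaSeq (m + 1) + betaSeq (m + 2)) := by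
    rw [sigmaIoo, sigmaSeq_succ (m + 1)]
  have hleft : Ioo (sigmaSeq (m + 1) - betaSeq (m + 2)) (sigmaSeq (m + 1)) ⊆ sigmaIoo m := by
    refine Ioo_subset_Ioo_left ?_
    linarith [sigmaSeq_succ m, betaSeq_succ_le (Nat.le_add_left 1 m)]
  rw [hright]
  exact (ofReal_le_interL1_Ioo hs _ (betaSeq_pos _)).trans (interL1_mono le_rfl hleft)

lemma betaSeq_ge_rpow {ε : ℝ} (hε : 0 < ε) {k : ℕ} (hk : 2 ≤ k) :
    ε ^ 2 * (k : ℝ) ^ (-(1 + 2 * ε)) ≤ betaSeq k := by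
  have hk' : (2 : ℝ) ≤ k := by exact_mod_cast hk
  have hk0 : (0 : ℝ) < k := by linarith
  have hlog : 0 < Real.log k := Real.log_pos (by linarith)
  have hpow : (k : ℝ) ^ (1 + 2 * ε) = k * ((k : ℝ) ^ ε) ^ 2 := by
    rw [← Real.rpow_natCast, ← Real.rpow_mul hk0.le, Real.rpow_add hk0, Real.rpow_one]
    norm_num [mul_comm]
  calc ε ^ 2 * (k : ℝ) ^ (-(1 + 2 * ε)) = 1 / (k * ((k : ℝ) ^ ε / ε) ^ 2) := by
        rw [Real.rpow_neg hk0.le, hpow]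
        field_simp
    _ ≤ 1 / (k * Real.log k ^ 2) := by
        gcongr
        exact Real.log_le_rpow_div hk0.le hε
    _ = betaSeq k := (betaSeq_of_two_le hk).symm

/-- With `ε = s/2` in `betaSeq_ge_rpow`, the terms dominate a multiple of `(j + 3/2)^{-(1-s²)}`. -/
lemma not_summable_betaSeq_rpow {s : ℝ} (hs0 : 0 < s) (hs1 : s < 1) :
    ¬Summable fun j : ℕ => betaSeq (2 * j + 3) ^ (1 - s) := by
  set p := (1 + s) * (1 - s)
  set c := ((s / 2) ^ 2) ^ (1 - s) * 2 ^ (-p) with hc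
  have hlower (j : ℕ) : c * (1 / |(j : ℝ) + 3 / 2| ^ p) ≤ betaSeq (2 * j + 3) ^ (1 - s) := by
    have hj : (0 : ℝ) < j + 3 / 2 := by positivity
    have hk : ((2 * j + 3 : ℕ) : ℝ) = 2 * |(j : ℝ) + 3 / 2| := by
      rw [abs_of_pos hj]; push_cast; ring
    calc c * (1 / |(j : ℝ) + 3 / 2| ^ p)
        = ((s / 2) ^ 2 * ((2 * j + 3 : ℕ) : ℝ) ^ (-(1 + 2 * (s / 2)))) ^ (1 - s) := by
          rw [hk, abs_of_pos hj, Real.mul_rpow (by positivity) (by positivity),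
            Real.mul_rpow (by positivity) hj.le, Real.mul_rpow (by positivity) (by positivity),
            ← Real.rpow_mul (by positivity), ← Real.rpow_mul hj.le, one_div, ← Real.rpow_neg hj.le,
            show -(1 + 2 * (s / 2)) * (1 - s) = -p by ring, hc]
          ring
      _ ≤ betaSeq (2 * j + 3) ^ (1 - s) := by
          gcongr
          exact betaSeq_ge_rpow (by positivity) (by omega)
  intro hsum
  have hsum' : Summable fun j : ℕ => 1 / |(j : ℝ) + 3 / 2| ^ p :=
    (summable_mul_left_iff (by positivity : c ≠ 0)).mp
      (hsum.of_nonneg_of_le (fun j => by positivity) hlower)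
  have := (Real.summable_one_div_nat_add_rpow (3 / 2) p).mp hsum'
  nlinarith

lemma interL1_badSet_eq_top {s : ℝ} (hs0 : 0 < s) (hs1 : s < 1) :
    interL1 s badSet (badSetᶜ ∩ Ioo 0 Mtot) = ∞ := by
  have hnonneg (j : ℕ) : 0 ≤ 2 ^ (-(1 + s)) * betaSeq (2 * j + 3) ^ (1 - s) := by
    have := betaSeq_pos (2 * j + 3); positivity
  have hdiv : ¬Summable fun j : ℕ => 2 ^ (-(1 + s)) * betaSeq (2 * j + 3) ^ (1 - s) :=
    (summable_mul_left_iff (by positivity)).not.mpr (not_summable_betaSeq_rpow hs0 hs1)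
  refine eq_top_iff.mpr ?_
  calc ∞ = ∑' j : ℕ, ENNReal.ofReal (2 ^ (-(1 + s)) * betaSeq (2 * j + 3) ^ (1 - s)) :=
        (ENNReal.tsum_ofReal_eq_top hnonneg hdiv).symm
    _ ≤ ∑' j : ℕ, interL1 s (sigmaIoo (2 * j + 2)) (sigmaIoo (2 * j + 1)) :=
        ENNReal.tsum_le_tsum fun j => ofReal_le_interL1_sigmaIoo (by linarith) (2 * j + 1)
    _ ≤ interL1 s badSet (badSetᶜ ∩ Ioo 0 Mtot) :=
        tsum_interL1_le (fun _ => measurableSet_Ioo)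
          (pairwise_disjoint_sigmaIoo.comp_of_injective fun i j h => by omega)
          badSet_eq_iUnion.ge
          fun j =>
            subset_inter (sigmaIoo_odd_subset_compl_badSet j) (sigmaIoo_subset_Ioo_Mtot _)

theorem stmt_18 :
    badSet ⊆ Set.Ioo (0 : ℝ) Mtot ∧
      ∀ s ∈ Set.Ioo (0 : ℝ) 1, fracPer1 s badSet (Set.Ioo (0 : ℝ) Mtot) = ⊤ := by
  refine ⟨badSet_subset_Ioo_Mtot, fun s ⟨hs0, hs1⟩ => ?_⟩
  rw [fracPer1, inter_eq_left.mpr badSet_subset_Ioo_Mtot, interL1_badSet_eq_top hs0 hs1,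
    top_add, top_add]
end

section
/- Let φ : [0,∞) → [0,1] be measurable with φ = 0 on [10^{(4k)²}, 10^{(4k+1)²}) and φ = 1 on [10^{(4k+2)²}, 10^{(4k+3)²}) for all k ∈ ℕ. Then with ν_{0,k} = 10^{(4k+1)²}/k and ν_{1,k} = 10^{(4k+3)²}/k, lim_{k→∞} ∫_0^∞ φ(ν_{0,k}x)e^{-x} dx = 0 and lim_{k→∞} ∫_0^∞ φ(ν_{1,k}x)e^{-x} dx = 1; in particular lim_{ν→∞} ∫_0^∞ φ(νx)e^{-x} dx does not exist. -/
/-!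
For `ν > 0`, `φ (ν x)` vanishes (resp. equals `1`) for `x ∈ [a/ν, b/ν)` whenever `φ` does on
`[a, b)`. If `a/ν → 0` and `b/ν → ∞`, this interval carries almost all of the mass of
`e^{-x} dx`, which forces the integral to `0` (resp. `1`). Along `ν₀ₖ` and `ν₁ₖ` the ratios are
`k / 10^(8k+1)`, resp. `k / 10^(8k+5)`, and `k`. As both sequences tend to infinity, the
integral has no limit as `ν → ∞`.
-/

open MeasureTheory Filter Set Real Topology

lemma integral_exp_neg_Ioo {a b : ℝ} (hab : a ≤ b) :
    ∫ x in Ioo a b, exp (-x) = exp (-a) - exp (-b) := by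
  rw [← integral_Ioc_eq_integral_Ioo, ← intervalIntegral.integral_of_le hab,
    intervalIntegral.integral_comp_neg (fun x => exp x), integral_exp]

lemma integral_one_sub_mul_exp_neg {g : ℝ → ℝ}
    (hg : IntegrableOn (fun x => g x * exp (-x)) (Ioi 0)) :
    ∫ x in Ioi 0, (1 - g x) * exp (-x) = 1 - ∫ x in Ioi 0, g x * exp (-x) := by
  simp_rw [sub_mul, one_mul]
  rw [integral_sub (integrableOn_exp_neg_Ioi 0) hg, integral_exp_neg_Ioi_zero]

lemma exp_neg_sub_exp_neg_le_integral {g : ℝ → ℝ}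
    (hg : IntegrableOn (fun x => g x * exp (-x)) (Ioi 0)) (hg0 : ∀ x, 0 ≤ g x)
    {a b : ℝ} (ha : 0 ≤ a) (hone : ∀ x ∈ Ico a b, g x = 1) :
    exp (-a) - exp (-b) ≤ ∫ x in Ioi 0, g x * exp (-x) := by
  have hnonneg : 0 ≤ᵐ[volume.restrict (Ioi 0)] fun x => g x * exp (-x) :=
    ae_of_all _ fun x => mul_nonneg (hg0 x) (exp_pos _).le
  rcases le_or_gt a b with hab | hba
  · calc exp (-a) - exp (-b) = ∫ x in Ioo a b, exp (-x) := (integral_exp_neg_Ioo hab).symm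
      _ = ∫ x in Ioo a b, g x * exp (-x) :=
        setIntegral_congr_fun measurableSet_Ioo fun x hx => by
          simp [hone x (Ioo_subset_Ico_self hx)]
      _ ≤ ∫ x in Ioi 0, g x * exp (-x) :=
        setIntegral_mono_set hg hnonneg
          (Eventually.of_forall fun x hx => ha.trans_lt hx.1)
  · have hexp : exp (-a) ≤ exp (-b) := exp_le_exp.2 (by linarith)
    linarith [integral_nonneg_of_ae hnonneg]

lemma integrableOn_comp_mul_mul_exp_neg {f : ℝ → ℝ} (hf : Measurable f)
    (hf01 : ∀ x, f x ∈ Icc (0 : ℝ) 1) (ν : ℝ) :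
    IntegrableOn (fun x => f (ν * x) * exp (-x)) (Ioi 0) :=
  (integrableOn_exp_neg_Ioi 0).bdd_mul (c := 1)
    (hf.comp (measurable_const_mul ν)).aestronglyMeasurable
    (ae_of_all _ fun x => by
      rw [Real.norm_eq_abs, abs_of_nonneg (hf01 _).1]; exact (hf01 _).2)

theorem tendsto_integral_comp_mul_mul_exp_neg_of_eq_one {f : ℝ → ℝ} (hf : Measurable f)
    (hf01 : ∀ x, f x ∈ Icc (0 : ℝ) 1) {ι : Type*} {l : Filter ι}
    {ν a b : ι → ℝ} (hν : ∀ᶠ i in l, 0 < ν i) (ha : ∀ i, 0 ≤ a i)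
    (hone : ∀ i, ∀ x ∈ Ico (a i) (b i), f x = 1)
    (ha0 : Tendsto (fun i => a i / ν i) l (𝓝 0)) (hb : Tendsto (fun i => b i / ν i) l atTop) :
    Tendsto (fun i => ∫ x in Ioi 0, f (ν i * x) * exp (-x)) l (𝓝 1) := by
  have hlower : ∀ᶠ i in l, exp (-(a i / ν i)) - exp (-(b i / ν i)) ≤
      ∫ x in Ioi 0, f (ν i * x) * exp (-x) := by
    filter_upwards [hν] with i hνi
    refine exp_neg_sub_exp_neg_le_integral (integrableOn_comp_mul_mul_exp_neg hf hf01 _)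
      (fun x => (hf01 _).1) (div_nonneg (ha i) hνi.le) fun x hx => hone i _ ?_
    rwa [← preimage_const_mul_Ico₀ _ _ hνi] at hx
  have hupper : ∀ i, ∫ x in Ioi 0, f (ν i * x) * exp (-x) ≤ 1 := by
    intro i
    have hcompl := integral_one_sub_mul_exp_neg (integrableOn_comp_mul_mul_exp_neg hf hf01 (ν i))
    have hcompl_nonneg : 0 ≤ ∫ x in Ioi 0, (1 - f (ν i * x)) * exp (-x) :=
      setIntegral_nonneg measurableSet_Ioi fun x _ =>
        mul_nonneg (sub_nonneg.2 (hf01 _).2) (exp_pos _).le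
    linarith
  have hbound : Tendsto (fun i => exp (-(a i / ν i)) - exp (-(b i / ν i))) l (𝓝 1) := by
    have h1 := (continuous_exp.tendsto _).comp ha0.neg
    have h2 := tendsto_exp_neg_atTop_nhds_zero.comp hb
    simpa using h1.sub h2
  exact tendsto_of_tendsto_of_tendsto_of_le_of_le' hbound tendsto_const_nhds hlower
    (Eventually.of_forall hupper)

theorem tendsto_integral_comp_mul_mul_exp_neg_of_eq_zero {f : ℝ → ℝ} (hf : Measurable f)
    (hf01 : ∀ x, f x ∈ Icc (0 : ℝ) 1) {ι : Type*} {l : Filter ι}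
    {ν a b : ι → ℝ} (hν : ∀ᶠ i in l, 0 < ν i) (ha : ∀ i, 0 ≤ a i)
    (hzero : ∀ i, ∀ x ∈ Ico (a i) (b i), f x = 0)
    (ha0 : Tendsto (fun i => a i / ν i) l (𝓝 0)) (hb : Tendsto (fun i => b i / ν i) l atTop) :
    Tendsto (fun i => ∫ x in Ioi 0, f (ν i * x) * exp (-x)) l (𝓝 0) := by
  have hcompl := tendsto_integral_comp_mul_mul_exp_neg_of_eq_one (f := fun y => 1 - f y)
    (measurable_const.sub hf) (fun x => ⟨sub_nonneg.2 (hf01 x).2, by linarith [(hf01 x).1]⟩)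
    hν ha (fun i x hx => by simp [hzero i x hx]) ha0 hb
  simp_rw [integral_one_sub_mul_exp_neg (integrableOn_comp_mul_mul_exp_neg hf hf01 _)] at hcompl
  simpa using (tendsto_const_nhds (x := (1 : ℝ))).sub hcompl

lemma tendsto_ten_pow_div_ten_pow_div {p q : ℕ → ℕ} (hpq : ∀ k, p k + k ≤ q k) :
    Tendsto (fun k : ℕ => (10 : ℝ) ^ p k / ((10 : ℝ) ^ q k / k)) atTop (𝓝 0) := by
  refine tendsto_of_tendsto_of_tendsto_of_le_of_le tendsto_const_nhds
    (by simpa using tendsto_pow_const_div_const_pow_of_one_lt 1 (by norm_num : (1 : ℝ) < 10))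
    (fun k => by positivity) fun k => ?_
  rw [div_div_eq_mul_div, div_le_div_iff₀ (by positivity) (by positivity)]
  calc (10 : ℝ) ^ p k * k * 10 ^ k = k * 10 ^ (p k + k) := by ring
    _ ≤ k * 10 ^ q k :=
      mul_le_mul_of_nonneg_left (pow_le_pow_right₀ (by norm_num) (hpq k)) k.cast_nonneg

lemma tendsto_ten_pow_div_atTop {q : ℕ → ℕ} (hq : ∀ k, 2 * k ≤ q k) :
    Tendsto (fun k : ℕ => (10 : ℝ) ^ q k / k) atTop atTop := by
  refine tendsto_atTop_mono' atTop ?_ tendsto_natCast_atTop_atTop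
  filter_upwards [eventually_gt_atTop 0] with k hk
  have hk10 : (k : ℝ) ≤ 10 ^ k := by exact_mod_cast (Nat.lt_pow_self (by norm_num)).le
  rw [le_div_iff₀ (by positivity)]
  calc (k : ℝ) * k ≤ 10 ^ k * 10 ^ k := by gcongr
    _ = 10 ^ (2 * k) := by ring
    _ ≤ 10 ^ q k := pow_le_pow_right₀ (by norm_num) (hq k)

theorem stmt_19 (φ : ℝ → ℝ) (hφm : Measurable φ)
    (hφ01 : ∀ x, φ x ∈ Set.Icc (0 : ℝ) 1)
    (h0 : ∀ k : ℕ, ∀ x ∈ Set.Ico ((10 : ℝ) ^ ((4 * k) ^ 2)) ((10 : ℝ) ^ ((4 * k + 1) ^ 2)),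
      φ x = 0)
    (h1 : ∀ k : ℕ, ∀ x ∈ Set.Ico ((10 : ℝ) ^ ((4 * k + 2) ^ 2)) ((10 : ℝ) ^ ((4 * k + 3) ^ 2)),
      φ x = 1) :
    Tendsto (fun k : ℕ =>
        ∫ x in Set.Ioi (0 : ℝ), φ (((10 : ℝ) ^ ((4 * k + 1) ^ 2) / k) * x) * Real.exp (-x))
      atTop (nhds 0) ∧
    Tendsto (fun k : ℕ =>
        ∫ x in Set.Ioi (0 : ℝ), φ (((10 : ℝ) ^ ((4 * k + 3) ^ 2) / k) * x) * Real.exp (-x))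
      atTop (nhds 1) ∧
    ¬ ∃ l : ℝ, Tendsto (fun ν : ℝ =>
        ∫ x in Set.Ioi (0 : ℝ), φ (ν * x) * Real.exp (-x)) atTop (nhds l) := by
  have hν₀ := tendsto_ten_pow_div_atTop (q := fun k => (4 * k + 1) ^ 2) fun k => by nlinarith
  have hν₁ := tendsto_ten_pow_div_atTop (q := fun k => (4 * k + 3) ^ 2) fun k => by nlinarith
  have lim₀ := tendsto_integral_comp_mul_mul_exp_neg_of_eq_zero hφm hφ01
    (hν₀.eventually_gt_atTop 0) (fun k => by positivity) h0
    (tendsto_ten_pow_div_ten_pow_div fun k => by nlinarith)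
    (by simpa using tendsto_natCast_atTop_atTop)
  have lim₁ := tendsto_integral_comp_mul_mul_exp_neg_of_eq_one hφm hφ01
    (hν₁.eventually_gt_atTop 0) (fun k => by positivity) h1
    (tendsto_ten_pow_div_ten_pow_div fun k => by nlinarith)
    (by simpa using tendsto_natCast_atTop_atTop)
  refine ⟨lim₀, lim₁, fun ⟨l, hl⟩ => ?_⟩
  have hl₀ : l = 0 := tendsto_nhds_unique (hl.comp hν₀) lim₀
  have hl₁ : l = 1 := tendsto_nhds_unique (hl.comp hν₁) lim₁
  exact zero_ne_one (hl₀.symm.trans hl₁)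
end
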